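/- There exist absolute constants C > 0 and C' > 0 such that the following holds for all positive integers d, k, n and all m ≥ 2. Let x_1,…,x_n ∈ ℝ^d have ‖x_i‖₂ = 1 and let y_1,…,y_n ∈ ℝ^k. Let V be a random k×m matrix with i.i.d. N(0, 1/k) entries. Then with probability at least 1 − C'/m over V, simultaneously for every hidden weight matrix W ∈ ℝ^{m×d} and every i ∈ {1,…,n}: ‖∇_W ℓ(f_{V,W}(x_i), y_i)‖_{2,∞}² ≤ C · ℓ(f_{V,W}(x_i), y_i) · log m. -/

import Mathlib

/-!
By Cauchy–Schwarz, the `j`-th row of `∇_W ℓ` has squared norm at most `2 ℓ ‖v_j‖²`, whatever `W`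
and `x` are, so it suffices that every column of `V` has `‖v_j‖² ≤ 16 log m`. Each `‖v_j‖²` is a
sum of `k` independent squares of `N(0, 1/k)` variables, and `E exp ((k/4) g²) = √2` for
`g ~ N(0, 1/k)`; the Chernoff bound gives `P (‖v_j‖² > a) ≤ exp (-a/8)` for `a ≥ 4`, and a union
bound over the `m` columns finishes.
-/

open MeasureTheory ProbabilityTheory NNReal

/-- Output of the two-layer ReLU network `f_{V,W}(x) = V σ(W x)`. -/
noncomputable def netOut {d k m : ℕ} (V : Matrix (Fin k) (Fin m) ℝ)
    (W : Matrix (Fin m) (Fin d) ℝ) (x : Fin d → ℝ) : Fin k → ℝ :=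
  V.mulVec fun j => max (W.mulVec x j) 0

/-- Squared-error loss `ℓ(f_{V,W}(x), y) = ½‖f_{V,W}(x) − y‖²`. -/
noncomputable def netLoss {d k m : ℕ} (V : Matrix (Fin k) (Fin m) ℝ)
    (W : Matrix (Fin m) (Fin d) ℝ) (x : Fin d → ℝ) (y : Fin k → ℝ) : ℝ :=
  (1 / 2) * ∑ r, (netOut V W x r - y r) ^ 2

/-- The (formal) gradient `∇_W ℓ(f_{V,W}(x), y)`: its `j`-th row is
`⟨f_{V,W}(x) − y, v_j⟩ · 1{⟨w_j, x⟩ ≥ 0} · xᵀ`. -/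
noncomputable def netGrad {d k m : ℕ} (V : Matrix (Fin k) (Fin m) ℝ)
    (W : Matrix (Fin m) (Fin d) ℝ) (x : Fin d → ℝ) (y : Fin k → ℝ) :
    Matrix (Fin m) (Fin d) ℝ :=
  Matrix.of fun j p =>
    (∑ r, (netOut V W x r - y r) * V r j) * (if 0 ≤ W.mulVec x j then 1 else 0) * x p

open Real
open scoped ENNReal

lemma lintegral_exp_mul_sq_gaussianReal {v : ℝ≥0} (hv : v ≠ 0) {t : ℝ} (ht : 2 * t * v < 1) :
    ∫⁻ x, ENNReal.ofReal (exp (t * x ^ 2)) ∂gaussianReal 0 v =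
      ENNReal.ofReal (√(1 - 2 * t * v))⁻¹ := by
  have hv' : (0 : ℝ) < v := by positivity
  set b : ℝ := (1 - 2 * t * v) / (2 * v) with hb_def
  have hb : 0 < b := div_pos (by linarith) (by positivity)
  have hdensity : ∀ x : ℝ, gaussianPDF 0 v x * ENNReal.ofReal (exp (t * x ^ 2)) =
      ENNReal.ofReal ((√(2 * π * v))⁻¹ * exp (-b * x ^ 2)) := by
    intro x
    rw [gaussianPDF, gaussianPDFReal, ← ENNReal.ofReal_mul (by positivity), mul_assoc,
      ← exp_add]
    congr 3
    rw [hb_def]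
    field_simp
    ring
  rw [gaussianReal_of_var_ne_zero _ hv, lintegral_withDensity_eq_lintegral_mul _
    (measurable_gaussianPDF _ _) (by fun_prop)]
  simp_rw [Pi.mul_apply, hdensity]
  rw [← ofReal_integral_eq_lintegral_ofReal ((integrable_exp_neg_mul_sq hb).const_mul _)
    (ae_of_all _ fun x => by positivity), integral_const_mul, integral_gaussian,
    ← Real.sqrt_inv, ← Real.sqrt_mul (by positivity), ← Real.sqrt_inv]
  congr 2
  rw [hb_def]
  field_simp

lemma measure_lt_sum_le_prod_lintegral_exp {Ω ι : Type*} [MeasurableSpace Ω] {μ : Measure Ω}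
    [Fintype ι] {Y : ι → Ω → ℝ} (hY : iIndepFun Y μ) (hYm : ∀ i, Measurable (Y i))
    {t : ℝ} (ht : 0 ≤ t) (a : ℝ) :
    μ {ω | a < ∑ i, Y i ω} ≤
      ENNReal.ofReal (exp (-(t * a))) * ∏ i, ∫⁻ ω, ENNReal.ofReal (exp (t * Y i ω)) ∂μ := by
  have hexp : iIndepFun (fun i ω => ENNReal.ofReal (exp (t * Y i ω))) μ :=
    hY.comp (fun _ u => ENNReal.ofReal (exp (t * u))) fun _ => by fun_prop
  rw [← lintegral_prod_eq_prod_lintegral_of_indepFun _ _ hexp fun i => by fun_prop,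
    ← lintegral_const_mul _ (by fun_prop),
    ← lintegral_indicator_one (measurableSet_lt measurable_const (by fun_prop))]
  refine lintegral_mono fun ω => ?_
  by_cases hω : a < ∑ i, Y i ω
  · rw [Set.indicator_of_mem (show ω ∈ {ω | a < ∑ i, Y i ω} from hω), Pi.one_apply,
      ← ENNReal.ofReal_prod_of_nonneg fun i _ => (exp_pos _).le,
      ← ENNReal.ofReal_mul (exp_pos _).le, ← exp_sum, ← exp_add, ← Finset.mul_sum]
    refine ENNReal.one_le_ofReal.mpr (one_le_exp ?_)
    nlinarith [mul_nonneg ht (sub_nonneg.mpr hω.le)]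
  · simp [hω]

lemma exp_neg_mul_sqrt_two_pow_le {k : ℕ} (hk : 0 < k) {a : ℝ} (ha : 4 ≤ a) :
    exp (-(k / 4 * a)) * √2 ^ k ≤ exp (-a / 8) := by
  have hk' : (1 : ℝ) ≤ k := by exact_mod_cast hk
  have hsqrt : √2 ^ k = exp (k * (log 2 / 2)) := by
    rw [← log_sqrt zero_le_two, exp_nat_mul, exp_log (by positivity)]
  rw [hsqrt, ← exp_add, exp_le_exp]
  have hlog := log_two_lt_d9
  nlinarith [mul_nonneg (sub_nonneg.mpr hk') (by linarith : (0 : ℝ) ≤ a / 4 - log 2 / 2)]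

lemma measure_lt_sum_sq_col_le {k m : ℕ} (hk : 0 < k) (j : Fin m) {a : ℝ} (ha : 4 ≤ a) :
    (Measure.pi fun _ : Fin k => Measure.pi fun _ : Fin m => gaussianReal 0 (1 / (k : ℝ≥0)))
      {V : Fin k → Fin m → ℝ | a < ∑ r, V r j ^ 2} ≤ ENNReal.ofReal (exp (-a / 8)) := by
  set γ := gaussianReal 0 (1 / (k : ℝ≥0))
  have hk' : (0 : ℝ) < k := by exact_mod_cast hk
  have hrow : ∀ r : Fin k, ∫⁻ V : Fin k → Fin m → ℝ, ENNReal.ofReal (exp (k / 4 * V r j ^ 2))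
      ∂Measure.pi (fun _ => Measure.pi fun _ => γ) = ENNReal.ofReal √2 := by
    intro r
    have hvar : 2 * (k / 4 : ℝ) * ((1 / (k : ℝ≥0) : ℝ≥0) : ℝ) < 1 := by
      push_cast; field_simp; norm_num
    have hr := (measurePreserving_eval (fun _ : Fin k => Measure.pi fun _ : Fin m => γ) r
      ).lintegral_comp (by fun_prop :
        Measurable fun row : Fin m → ℝ => ENNReal.ofReal (exp (k / 4 * row j ^ 2)))
    have hj := (measurePreserving_eval (fun _ : Fin m => γ) j).lintegral_comp (by fun_prop :
        Measurable fun u : ℝ => ENNReal.ofReal (exp (k / 4 * u ^ 2)))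
    simp only [Function.eval] at hr hj
    rw [hr, hj, lintegral_exp_mul_sq_gaussianReal (by positivity) hvar]
    congr 1
    push_cast
    rw [← Real.sqrt_inv]
    congr 1
    field_simp
    norm_num
  have hindep : iIndepFun (fun r (V : Fin k → Fin m → ℝ) => V r j ^ 2)
      (Measure.pi fun _ => Measure.pi fun _ => γ) :=
    iIndepFun_pi fun _ => (by fun_prop : Measurable fun row : Fin m → ℝ => row j ^ 2).aemeasurable
  calc _ ≤ ENNReal.ofReal (exp (-(k / 4 * a))) * ∏ r : Fin k, ∫⁻ V, ENNReal.ofReal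
          (exp (k / 4 * V r j ^ 2)) ∂Measure.pi (fun _ => Measure.pi fun _ => γ) :=
        measure_lt_sum_le_prod_lintegral_exp hindep (fun _ => by fun_prop) (by positivity) a
    _ = ENNReal.ofReal (exp (-(k / 4 * a)) * √2 ^ k) := by
        simp_rw [hrow, Finset.prod_const, Finset.card_univ, Fintype.card_fin]
        rw [ENNReal.ofReal_mul (exp_pos _).le, ENNReal.ofReal_pow (sqrt_nonneg _)]
    _ ≤ ENNReal.ofReal (exp (-a / 8)) :=
        ENNReal.ofReal_le_ofReal (exp_neg_mul_sqrt_two_pow_le hk ha)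

lemma netLoss_nonneg {d k m : ℕ} (V : Matrix (Fin k) (Fin m) ℝ) (W : Matrix (Fin m) (Fin d) ℝ)
    (x : Fin d → ℝ) (y : Fin k → ℝ) : 0 ≤ netLoss V W x y :=
  mul_nonneg (by norm_num) (Finset.sum_nonneg fun _ _ => sq_nonneg _)

lemma sum_netGrad_sq_le {d k m : ℕ} (V : Matrix (Fin k) (Fin m) ℝ) (W : Matrix (Fin m) (Fin d) ℝ)
    {x : Fin d → ℝ} (hx : ∑ p, x p ^ 2 = 1) (y : Fin k → ℝ) (j : Fin m) :
    ∑ p, netGrad V W x y j p ^ 2 ≤ 2 * netLoss V W x y * ∑ r, V r j ^ 2 := by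
  set A := ∑ r, (netOut V W x r - y r) * V r j
  set b : ℝ := if 0 ≤ W.mulVec x j then 1 else 0
  have hb : b ^ 2 ≤ 1 := by unfold b; split_ifs <;> norm_num
  calc ∑ p, netGrad V W x y j p ^ 2 = A ^ 2 * b ^ 2 := by
        simp only [netGrad, Matrix.of_apply, mul_pow, ← Finset.mul_sum, hx, mul_one]; rfl
    _ ≤ A ^ 2 := mul_le_of_le_one_right (sq_nonneg A) hb
    _ ≤ (∑ r, (netOut V W x r - y r) ^ 2) * ∑ r, V r j ^ 2 :=
        Finset.sum_mul_sq_le_sq_mul_sq _ _ _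
    _ = 2 * netLoss V W x y * ∑ r, V r j ^ 2 := by rw [netLoss]; ring

lemma iSup_sum_netGrad_sq_le {d k m : ℕ} {V : Matrix (Fin k) (Fin m) ℝ} {a : ℝ} (ha : 0 ≤ a)
    (hV : ∀ j, ∑ r, V r j ^ 2 ≤ a) (W : Matrix (Fin m) (Fin d) ℝ) {x : Fin d → ℝ}
    (hx : ∑ p, x p ^ 2 = 1) (y : Fin k → ℝ) :
    ⨆ j, ∑ p, netGrad V W x y j p ^ 2 ≤ 2 * netLoss V W x y * a :=
  have hL := netLoss_nonneg V W x y
  Real.iSup_le (fun j => (sum_netGrad_sq_le V W hx y j).trans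
    (mul_le_mul_of_nonneg_left (hV j) (by linarith))) (by positivity)

/-- There are absolute constants `C, C' > 0` such that for a random output matrix `V` with
i.i.d. `N(0, 1/k)` entries, with probability at least `1 − C'/m`, simultaneously for every
hidden matrix `W` and every training index `i`,
`‖∇_W ℓ(f_{V,W}(x_i), y_i)‖_{2,∞}² ≤ C · ℓ(f_{V,W}(x_i), y_i) · log m`. -/
theorem netGrad_two_inf_bound :
    ∃ C C' : ℝ, 0 < C ∧ 0 < C' ∧
      ∀ (d k n m : ℕ), 0 < d → 0 < k → 0 < n → 2 ≤ m →
        ∀ (x : Fin n → Fin d → ℝ) (y : Fin n → Fin k → ℝ),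
          (∀ i, ∑ p, x i p ^ 2 = 1) →
          1 - ENNReal.ofReal (C' / m) ≤
            (Measure.pi fun _ : Fin k => Measure.pi fun _ : Fin m =>
                gaussianReal 0 (1 / (k : ℝ≥0)))
              {V : Fin k → Fin m → ℝ |
                ∀ (W : Matrix (Fin m) (Fin d) ℝ) (i : Fin n),
                  (⨆ j : Fin m, ∑ p, netGrad V W (x i) (y i) j p ^ 2)
                    ≤ C * netLoss V W (x i) (y i) * Real.log m} := by
  refine ⟨32, 1, by norm_num, by norm_num, fun d k n m _ hk _ hm x y hx => ?_⟩
  set μ := Measure.pi fun _ : Fin k => Measure.pi fun _ : Fin m =>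
    gaussianReal 0 (1 / (k : ℝ≥0))
  -- `a = 16 log m` makes each column tail `exp (-a / 8) = m⁻²`, so the `m` columns cost `1 / m`.
  set a := 16 * log m
  have hm' : (2 : ℝ) ≤ m := by exact_mod_cast hm
  have hlog : log 2 ≤ log m := log_le_log two_pos hm'
  have ha : 4 ≤ a := by linarith [log_two_gt_d9]
  set bad := ⋃ j : Fin m, {V : Fin k → Fin m → ℝ | a < ∑ r, V r j ^ 2}
  have hcard : (m : ℝ) * exp (-a / 8) = 1 / m := by
    rw [show -a / 8 = -log (m ^ 2) by rw [log_pow]; ring, exp_neg, exp_log (by positivity)]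
    field_simp
  have hbad : μ bad ≤ ENNReal.ofReal (1 / m) := calc
    μ bad ≤ ∑ j : Fin m, μ {V | a < ∑ r, V r j ^ 2} := measure_iUnion_fintype_le _ _
    _ ≤ ∑ _j : Fin m, ENNReal.ofReal (exp (-a / 8)) :=
        Finset.sum_le_sum fun j _ => measure_lt_sum_sq_col_le hk j ha
    _ = ENNReal.ofReal (1 / m) := by
        rw [Finset.sum_const, Finset.card_univ, Fintype.card_fin, nsmul_eq_mul,
          ← ENNReal.ofReal_natCast, ← ENNReal.ofReal_mul (Nat.cast_nonneg m), hcard]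
  have hgood : badᶜ ⊆ {V | ∀ (W : Matrix (Fin m) (Fin d) ℝ) (i : Fin n),
      (⨆ j : Fin m, ∑ p, netGrad V W (x i) (y i) j p ^ 2)
        ≤ 32 * netLoss V W (x i) (y i) * log m} := by
    intro V hV W i
    simp only [bad, Set.compl_iUnion, Set.mem_iInter, Set.mem_compl_iff, Set.mem_ofPred_eq,
      not_lt] at hV
    calc _ ≤ 2 * netLoss V W (x i) (y i) * a :=
          iSup_sum_netGrad_sq_le (by linarith) hV W (hx i) (y i)
      _ = 32 * netLoss V W (x i) (y i) * log m := by ring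
  calc 1 - ENNReal.ofReal (1 / m) ≤ 1 - μ bad := tsub_le_tsub_left hbad 1
    _ ≤ μ badᶜ := by
        rw [tsub_le_iff_right, add_comm, ← measure_univ (μ := μ)]
        exact measure_univ_le_add_compl bad
    _ ≤ _ := measure_mono hgood
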